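/- Let F be a finite field of characteristic at least 5, let a, b ∈ F satisfy 4a³ + 27b² ≠ 0, and for coefficients (a', b') with 4a'³ + 27b'² ≠ 0 let N(a', b') = 1 + #{(x, y) ∈ F × F : y² = x³ + a'x + b'} denote the number of points (including the point at infinity) of the elliptic curve y² = x³ + a'x + b' over F. Let c ∈ F be nonzero. Then 4(c²a)³ + 27(c³b)² ≠ 0, and: (i) if c is a square in F, then N(c²a, c³b) = N(a, b); (ii) if c is not a square in F, then N(c²a, c³b) + N(a, b) = 2(#F + 1). -/

import Mathlib

/-!
Over `F` with `q` elements and quadratic character `χ`, the curve `y² = f(x)` has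
`q + 1 + ∑ₓ χ(f(x))` points, since `u` has `1 + χ(u)` square roots. Substituting `x ↦ c x`
turns `x³ + c²a x + c³b` into `c³ (x³ + a x + b)`, so the character sum of the twist is
`χ(c)³ = χ(c)` times that of the original curve, which gives both cases.
-/

noncomputable def numPoints (F : Type*) [Field F] (a' b' : F) : ℕ :=
  1 + Nat.card {pt : F × F // pt.2 ^ 2 = pt.1 ^ 3 + a' * pt.1 + b'}

section

variable {F : Type*} [Field F] [Fintype F] [DecidableEq F]

lemma card_sqrts_eq_quadraticChar_add_one (h2 : ringChar F ≠ 2) (u : F) :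
    (Fintype.card {y : F // y ^ 2 = u} : ℤ) = quadraticChar F u + 1 := by
  rw [← quadraticChar_card_sqrts h2 u, Set.toFinset_card]
  rfl

lemma numPoints_eq_card_add_sum_quadraticChar (h2 : ringChar F ≠ 2) (a b : F) :
    (numPoints F a b : ℤ) =
      Fintype.card F + 1 + ∑ x : F, quadraticChar F (x ^ 3 + a * x + b) := by
  have hfibres : Nat.card {pt : F × F // pt.2 ^ 2 = pt.1 ^ 3 + a * pt.1 + b} =
      ∑ x : F, Fintype.card {y : F // y ^ 2 = x ^ 3 + a * x + b} := by
    rw [Nat.card_eq_fintype_card,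
      Fintype.card_congr
        (Equiv.subtypeProdEquivSigmaSubtype fun x y : F => y ^ 2 = x ^ 3 + a * x + b),
      Fintype.card_sigma]
  rw [numPoints, Nat.cast_add, hfibres, Nat.cast_sum,
    Finset.sum_congr rfl fun x _ => card_sqrts_eq_quadraticChar_add_one h2 _,
    Finset.sum_add_distrib, Finset.sum_const, Finset.card_univ, nsmul_one]
  ring

lemma sum_quadraticChar_twist (a b : F) {c : F} (hc : c ≠ 0) :
    ∑ x : F, quadraticChar F (x ^ 3 + c ^ 2 * a * x + c ^ 3 * b) =
      quadraticChar F c * ∑ x : F, quadraticChar F (x ^ 3 + a * x + b) := by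
  have hχ_cube : quadraticChar F c ^ 3 = quadraticChar F c := by
    rw [pow_succ, quadraticChar_sq_one hc, one_mul]
  rw [Finset.mul_sum]
  refine (Fintype.sum_equiv (Equiv.mulLeft₀ c hc) _ _ fun x => ?_).symm
  have hsubst : (c * x) ^ 3 + c ^ 2 * a * (c * x) + c ^ 3 * b =
      c ^ 3 * (x ^ 3 + a * x + b) := by ring
  rw [Equiv.mulLeft₀_apply, hsubst, map_mul, map_pow, hχ_cube]

lemma numPoints_twist (h2 : ringChar F ≠ 2) (a b : F) {c : F} (hc : c ≠ 0) :
    (numPoints F (c ^ 2 * a) (c ^ 3 * b) : ℤ) - (Fintype.card F + 1) =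
      quadraticChar F c * ((numPoints F a b : ℤ) - (Fintype.card F + 1)) := by
  rw [numPoints_eq_card_add_sum_quadraticChar h2, numPoints_eq_card_add_sum_quadraticChar h2,
    sum_quadraticChar_twist a b hc]
  ring

end

theorem stmt_12 {F : Type*} [Field F] [Fintype F] (hchar : 5 ≤ ringChar F)
    (a b : F) (hab : 4 * a ^ 3 + 27 * b ^ 2 ≠ 0)
    (c : F) (hc : c ≠ 0) :
    4 * (c ^ 2 * a) ^ 3 + 27 * (c ^ 3 * b) ^ 2 ≠ 0 ∧
    ((∃ e : F, c = e ^ 2) →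
      numPoints F (c ^ 2 * a) (c ^ 3 * b) = numPoints F a b) ∧
    (¬ (∃ e : F, c = e ^ 2) →
      numPoints F (c ^ 2 * a) (c ^ 3 * b) + numPoints F a b =
        2 * (Fintype.card F + 1)) := by
  classical
  have htwist := numPoints_twist (by omega) a b hc
  refine ⟨?_, ?_, fun hns => ?_⟩
  · have hdisc : 4 * (c ^ 2 * a) ^ 3 + 27 * (c ^ 3 * b) ^ 2 =
        c ^ 6 * (4 * a ^ 3 + 27 * b ^ 2) := by ring
    rw [hdisc]
    exact mul_ne_zero (pow_ne_zero _ hc) hab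
  · rintro ⟨e, rfl⟩
    rw [quadraticChar_sq_one' (left_ne_zero_of_mul (sq e ▸ hc)), one_mul] at htwist
    exact_mod_cast sub_left_injective htwist
  · have hχ : quadraticChar F c = -1 :=
      quadraticChar_neg_one_iff_not_isSquare.mpr fun ⟨e, he⟩ => hns ⟨e, he.trans (sq e).symm⟩
    rw [hχ] at htwist
    have : (numPoints F (c ^ 2 * a) (c ^ 3 * b) : ℤ) + numPoints F a b =
        2 * (Fintype.card F + 1) := by linarith
    exact_mod_cast this
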